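/- arXiv:1607.08449 — 5 statements merged into one kernel-verified Lean document; each statement's English description precedes it below -/
import Mathlib

section
/- Let K be a finite abstract simplicial complex of dimension d containing m simplices, and let t be a natural number with β = ⌊(t+1)/(d+1)⌋ ≥ 2. Then the number of distinct filtrations f : K → {0,1,...,t} (i.e., functions satisfying f(τ) ≤ f(σ) whenever τ ⊆ σ) is at least β^m. -/
/-- A finite simplicial complex of dimension `d` with `m` simplices has at
least `β ^ m` distinct filtrations `f : K → {0,…,t}`, where `β = ⌊(t+1)/(d+1)⌋ ≥ 2`. -/
theorem stmt_0 {V : Type*} [Fintype V] [DecidableEq V]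
    (K : Finset (Finset V)) (d t m β : ℕ)
    (hne : ∀ σ ∈ K, σ.Nonempty)
    (hclosed : ∀ σ ∈ K, ∀ τ : Finset V, τ ⊆ σ → τ.Nonempty → τ ∈ K)
    (hdim_le : ∀ σ ∈ K, σ.card ≤ d + 1)
    (hdim_eq : ∃ σ ∈ K, σ.card = d + 1)
    (hm : K.card = m)
    (hβ : β = (t + 1) / (d + 1))
    (hβ2 : 2 ≤ β) :
    β ^ m ≤
      Set.ncard {f : {σ : Finset V // σ ∈ K} → Fin (t + 1) |
        ∀ τ σ : {σ : Finset V // σ ∈ K}, (τ : Finset V) ⊆ (σ : Finset V) → f τ ≤ f σ} := by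
  set S := {f : {σ : Finset V // σ ∈ K} → Fin (t + 1) |
        ∀ τ σ : {σ : Finset V // σ ∈ K}, (τ : Finset V) ⊆ (σ : Finset V) → f τ ≤ f σ}
  have hβmul : (d + 1) * β ≤ t + 1 := by
    subst hβ; exact Nat.mul_div_le (t + 1) (d + 1)
  have hbound : ∀ (σ : {σ : Finset V // σ ∈ K}) (g : Fin β),
      (σ.1.card - 1) * β + (g : ℕ) < t + 1 := by
    intro σ g
    have h1 : σ.1.card ≤ d + 1 := hdim_le σ.1 σ.2
    have h2 : (σ.1.card - 1) * β + (g : ℕ) < (σ.1.card - 1) * β + β :=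
      Nat.add_lt_add_left g.isLt _
    have h3 : (σ.1.card - 1) * β + β ≤ d * β + β := by
      have : σ.1.card - 1 ≤ d := by omega
      exact Nat.add_le_add_right (Nat.mul_le_mul_right β this) β
    calc (σ.1.card - 1) * β + (g : ℕ) < (σ.1.card - 1) * β + β := h2
      _ ≤ d * β + β := h3
      _ = (d + 1) * β := by ring
      _ ≤ t + 1 := hβmul
  let Φ : ({σ : Finset V // σ ∈ K} → Fin β) → ({σ : Finset V // σ ∈ K} → Fin (t + 1)) :=
    fun g σ => ⟨(σ.1.card - 1) * β + (g σ : ℕ), hbound σ (g σ)⟩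
  have hΦinj : Function.Injective Φ := by
    intro g g' h
    funext σ
    have := congrFun h σ
    simp only [Φ, Fin.mk.injEq] at this
    exact Fin.ext (by omega)
  have hΦmem : ∀ g, Φ g ∈ S := by
    intro g
    intro τ σ hsub
    rcases eq_or_lt_of_le (Finset.card_le_card hsub) with hc | hc
    · have : τ = σ := Subtype.ext (Finset.eq_of_subset_of_card_le hsub hc.ge)
      subst this; exact le_refl _
    · show (Φ g τ : ℕ) ≤ (Φ g σ : ℕ)
      simp only [Φ]
      have hτ1 : 1 ≤ τ.1.card := Finset.card_pos.2 (hne τ.1 τ.2)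
      have h1 : (τ.1.card - 1) * β + (g τ : ℕ) < τ.1.card * β := by
        have hlt := (g τ).isLt
        have hh : (τ.1.card - 1) * β + β = τ.1.card * β := by
          rw [← Nat.succ_mul, Nat.succ_eq_add_one, Nat.sub_add_cancel hτ1]
        omega
      have h2 : τ.1.card * β ≤ (σ.1.card - 1) * β :=
        Nat.mul_le_mul_right β (by omega)
      omega
  have hrange : Set.range Φ ⊆ S := by rintro _ ⟨g, rfl⟩; exact hΦmem g
  have hfin : S.Finite := Set.toFinite S
  have h1 : (Set.range Φ).ncard ≤ S.ncard := Set.ncard_le_ncard hrange hfin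
  have h2 : (Set.range Φ).ncard = Fintype.card ({σ : Finset V // σ ∈ K} → Fin β) := by
    rw [← Nat.card_coe_set_eq, Nat.card_range_of_injective hΦinj, Nat.card_eq_fintype_card]
  have h3 : Fintype.card ({σ : Finset V // σ ∈ K} → Fin β) = β ^ m := by
    rw [Fintype.card_fun, Fintype.card_fin, Fintype.card_coe, hm]
  omega
end

section
/- Fix a natural number t, a simplicial complex K of dimension d with m simplices, β = ⌊(t+1)/(d+1)⌋, and a bijection g : K → {1,...,m}. For each i ∈ {0,...,β^m − 1}, let b(i)_j denote the j-th digit of i written in base β with m digits, and define f_i(σ) = dim(σ)·β + b(i)_{g(σ)} + 1. Then each f_i is a monotone function from K to {0,...,t}: for all τ, σ ∈ K with τ ⊊ σ, f_i(τ) ≤ f_i(σ). -/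
/-- With `β = ⌊(t+1)/(d+1)⌋ ≥ 1`, a bijection `g : K ≃ Fin m`, and
`f_i(σ) = dim(σ)·β + b(i)_{g(σ)} + 1` (where `b(i)_j = i / β^j % β` is the `j`-th base-β
digit of `i`), each `f_i` is monotone on proper inclusions of simplices. -/
theorem stmt_1 {V : Type*} [Fintype V] [DecidableEq V]
    (K : Finset (Finset V)) (d t m β : ℕ)
    (hne : ∀ σ ∈ K, σ.Nonempty)
    (hclosed : ∀ σ ∈ K, ∀ τ : Finset V, τ ⊆ σ → τ.Nonempty → τ ∈ K)
    (hdim_le : ∀ σ ∈ K, σ.card ≤ d + 1)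
    (hm : K.card = m)
    (hβ : β = (t + 1) / (d + 1))
    (hβ1 : 1 ≤ β)
    (g : {σ : Finset V // σ ∈ K} ≃ Fin m)
    (i : ℕ) (hi : i < β ^ m) :
    ∀ τ σ : {σ : Finset V // σ ∈ K}, (τ : Finset V) ⊂ (σ : Finset V) →
      ((τ : Finset V).card - 1) * β + i / β ^ ((g τ : Fin m) : ℕ) % β + 1 ≤
        ((σ : Finset V).card - 1) * β + i / β ^ ((g σ : Fin m) : ℕ) % β + 1 := by
  intro τ σ h
  have h1 : (τ : Finset V).card < (σ : Finset V).card := Finset.card_lt_card h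
  have h2 : 1 ≤ (τ : Finset V).card := (hne _ τ.2).card_pos
  have h3 : i / β ^ ((g τ : Fin m) : ℕ) % β < β := Nat.mod_lt _ hβ1
  have key : ((τ : Finset V).card - 1) * β + β ≤ ((σ : Finset V).card - 1) * β := by
    have : ((τ : Finset V).card - 1) + 1 ≤ (σ : Finset V).card - 1 := by omega
    calc ((τ : Finset V).card - 1) * β + β = (((τ : Finset V).card - 1) + 1) * β := by ring
    _ ≤ ((σ : Finset V).card - 1) * β := Nat.mul_le_mul_right β this
  omega
end

section
/- Let K be a finite simplicial complex with filtration f and let M be its set of critical simplices. Then for every simplex σ ∈ K, f(σ) equals the minimum of f(τ) over all critical simplices τ ∈ M with σ ⊆ τ. In particular, the filtration is completely determined by its values on critical simplices. -/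
/-!
Among the cofaces of `σ` with the same filtration value, an inclusion-maximal one is critical:
by monotonicity every proper coface has value at least `f σ`, and equality would contradict
maximality. Since `f` is monotone, no coface of `σ` has smaller value, so this critical coface
attains the minimum.
-/

theorem exists_le_eq_and_critical_of_monotoneOn {α β : Type*} [Preorder α] [PartialOrder β]
    {K : Finset α} {f : α → β} (hf : MonotoneOn f K) {σ : α} (hσ : σ ∈ K) :
    ∃ τ ∈ K, σ ≤ τ ∧ f τ = f σ ∧ ∀ ρ ∈ K, τ < ρ → f τ < f ρ := by
  classical
  obtain ⟨τ, hστ, hτmax⟩ :=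
    (K.filter (f · = f σ)).exists_le_maximal (Finset.mem_filter.2 ⟨hσ, rfl⟩)
  obtain ⟨hτK, hfτ⟩ := Finset.mem_filter.1 hτmax.prop
  refine ⟨τ, hτK, hστ, hfτ, fun ρ hρK hτρ => ?_⟩
  refine (hf hτK hρK hτρ.le).lt_of_ne fun hfρ => hτρ.not_ge (hτmax.le_of_ge ?_ hτρ.le)
  exact Finset.mem_filter.2 ⟨hρK, hfρ ▸ hfτ⟩

theorem stmt_6_general {V : Type*} [Fintype V] [DecidableEq V]
    (K : Finset (Finset V)) (f : Finset V → ℕ)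
    (hmono : ∀ τ ∈ K, ∀ σ ∈ K, τ ⊆ σ → f τ ≤ f σ) :
    ∀ σ ∈ K,
      ∃ hcrit : (K.filter (fun τ => σ ⊆ τ ∧ ∀ ρ ∈ K, τ ⊂ ρ → f τ < f ρ)).Nonempty,
        f σ = (K.filter (fun τ => σ ⊆ τ ∧ ∀ ρ ∈ K, τ ⊂ ρ → f τ < f ρ)).inf' hcrit f := by
  intro σ hσ
  obtain ⟨τ, hτK, hστ, hfτ, hτcrit⟩ :=
    exists_le_eq_and_critical_of_monotoneOn (f := f) hmono hσ
  have hτ : τ ∈ K.filter (fun τ => σ ⊆ τ ∧ ∀ ρ ∈ K, τ ⊂ ρ → f τ < f ρ) :=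
    Finset.mem_filter.2 ⟨hτK, hστ, hτcrit⟩
  refine ⟨⟨τ, hτ⟩, le_antisymm ?_ ?_⟩
  · exact Finset.le_inf' _ _ fun ρ hρ =>
      hmono σ hσ ρ (Finset.mem_filter.1 hρ).1 (Finset.mem_filter.1 hρ).2.1
  · exact hfτ ▸ Finset.inf'_le f hτ

/-- For every simplex `σ` of a finite filtered simplicial complex, `f σ`
equals the minimum of `f τ` over the critical simplices `τ` containing `σ`. -/
theorem stmt_6 {V : Type*} [Fintype V] [DecidableEq V]
    (K : Finset (Finset V)) (t : ℕ) (f : Finset V → ℕ)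
    (hne : ∀ σ ∈ K, σ.Nonempty)
    (hclosed : ∀ σ ∈ K, ∀ τ : Finset V, τ ⊆ σ → τ.Nonempty → τ ∈ K)
    (hrange : ∀ σ ∈ K, f σ ≤ t)
    (hmono : ∀ τ ∈ K, ∀ σ ∈ K, τ ⊆ σ → f τ ≤ f σ) :
    ∀ σ ∈ K,
      ∃ hcrit : (K.filter (fun τ => σ ⊆ τ ∧ ∀ ρ ∈ K, τ ⊂ ρ → f τ < f ρ)).Nonempty,
        f σ = (K.filter (fun τ => σ ⊆ τ ∧ ∀ ρ ∈ K, τ ⊂ ρ → f τ < f ρ)).inf' hcrit f :=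
  stmt_6_general K f hmono
end

section
/- Let G be a finite simple graph, e = {u,v} an edge of G, and let H be the subgraph of G induced on {u, v} ∪ {x : x adjacent to both u and v}. Then a vertex set C containing both u and v is a maximal clique of G if and only if it is a maximal clique of H. -/
/-- For an edge `{u,v}` of a finite simple graph `G`, let
`S = {u, v} ∪ {x : x adjacent to both u and v}`. A vertex set `C` containing both `u`
and `v` is a maximal clique of `G` iff it is a maximal clique of the subgraph induced
on `S`. -/
theorem stmt_12 {V : Type*} [Fintype V] [DecidableEq V]
    (G : SimpleGraph V) (u v : V) (he : G.Adj u v)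
    (S : Set V) (hS : S = {x | x = u ∨ x = v ∨ (G.Adj x u ∧ G.Adj x v)})
    (C : Finset V) (hu : u ∈ C) (hv : v ∈ C) :
    (G.IsClique ↑C ∧ ∀ D : Finset V, G.IsClique ↑D → C ⊆ D → C = D) ↔
      (↑C ⊆ S ∧ G.IsClique ↑C ∧
        ∀ D : Finset V, ↑D ⊆ S → G.IsClique ↑D → C ⊆ D → C = D) := by
  have key : ∀ D : Finset V, G.IsClique ↑D → u ∈ D → v ∈ D → ↑D ⊆ S := by
    intro D hD huD hvD x hx
    subst hS
    by_cases hxu : x = u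
    · exact Or.inl hxu
    by_cases hxv : x = v
    · exact Or.inr (Or.inl hxv)
    exact Or.inr (Or.inr ⟨hD hx huD hxu, hD hx hvD hxv⟩)
  constructor
  · rintro ⟨hC, hmax⟩
    exact ⟨key C hC hu hv, hC, fun D _ hD hCD => hmax D hD hCD⟩
  · rintro ⟨_, hC, hmax⟩
    refine ⟨hC, fun D hD hCD => hmax D (key D hD (hCD hu) (hCD hv)) hD hCD⟩
end

section
/- Let Q ⊆ P be finite in a metric space, ρ ≥ 0, t ≥ 1, and give Del^ρ(Q,P) the filtration f(σ) = min{i : σ witnessed with relaxation ρi/t}. For x ∈ P and i ∈ {0,...,t}, let σ_x^i = {q ∈ Q : dist(x,q) ≤ dist(x,Q) + ρi/t}, where dist(x,Q) = min_{q∈Q} dist(x,q). Then every critical simplex τ of Del^ρ(Q,P) equals σ_x^{f(τ)} for some x ∈ P; hence the number of critical simplices is at most |P|·(t+1). -/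
open scoped Classical

/-- Membership in the relaxed Delaunay complex `Del^ρ(Q,P)` with witness set the finite
point set `P`. -/
def IsRelaxedDelaunay {X : Type*} [MetricSpace X] (P Q : Finset X) (ρ : ℝ)
    (σ : Finset X) : Prop :=
  σ.Nonempty ∧ σ ⊆ Q ∧ ∃ x ∈ P, ∀ qi ∈ σ, ∀ q ∈ Q, dist x qi ≤ dist x q + ρ

/-- The filtration value of `σ`: the least `i ≤ t` with `σ` witnessed at relaxation
`ρ·i/t`. -/
noncomputable def relaxedDelaunayFilt {X : Type*} [MetricSpace X] (P Q : Finset X)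
    (ρ : ℝ) (t : ℕ) (σ : Finset X) : ℕ :=
  sInf {i : ℕ | i ≤ t ∧ IsRelaxedDelaunay P Q (ρ * i / t) σ}

/-- `σ_x^i`: the points of `Q` within distance `dist(x,Q) + ρ·i/t` of `x`. -/
noncomputable def sigmaX {X : Type*} [MetricSpace X] (Q : Finset X) (hQ : Q.Nonempty)
    (ρ : ℝ) (t : ℕ) (x : X) (i : ℕ) : Finset X :=
  Q.filter (fun q => dist x q ≤ Q.inf' hQ (fun q' => dist x q') + ρ * i / t)

/-- Every critical simplex `τ` of `Del^ρ(Q,P)` equals `σ_x^{f(τ)}` for some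
witness `x ∈ P`; consequently the number of critical simplices is at most
`|P| · (t+1)`. -/
theorem stmt_16 {X : Type*} [MetricSpace X] [DecidableEq X]
    (P Q : Finset X) (hQ : Q.Nonempty) (ρ : ℝ) (hρ : 0 ≤ ρ) (t : ℕ) (ht : 1 ≤ t) :
    (∀ τ : Finset X, IsRelaxedDelaunay P Q ρ τ →
      (∀ σ : Finset X, IsRelaxedDelaunay P Q ρ σ → τ ⊂ σ →
        relaxedDelaunayFilt P Q ρ t τ < relaxedDelaunayFilt P Q ρ t σ) →
      ∃ x ∈ P, τ = sigmaX Q hQ ρ t x (relaxedDelaunayFilt P Q ρ t τ)) ∧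
    Set.ncard {τ : Finset X | IsRelaxedDelaunay P Q ρ τ ∧
        ∀ σ : Finset X, IsRelaxedDelaunay P Q ρ σ → τ ⊂ σ →
          relaxedDelaunayFilt P Q ρ t τ < relaxedDelaunayFilt P Q ρ t σ} ≤
      P.card * (t + 1) := by
  have htR : (t:ℝ) ≠ 0 := Nat.cast_ne_zero.mpr (by omega)
  have key : ∀ τ : Finset X, IsRelaxedDelaunay P Q ρ τ →
      (∀ σ : Finset X, IsRelaxedDelaunay P Q ρ σ → τ ⊂ σ →
        relaxedDelaunayFilt P Q ρ t τ < relaxedDelaunayFilt P Q ρ t σ) →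
      ∃ x ∈ P, τ = sigmaX Q hQ ρ t x (relaxedDelaunayFilt P Q ρ t τ) := by
    intro τ hτ hcrit
    have htmem : t ∈ {i : ℕ | i ≤ t ∧ IsRelaxedDelaunay P Q (ρ * i / t) τ} := by
      refine ⟨le_refl t, ?_⟩
      have : ρ * (t:ℕ) / (t:ℕ) = ρ := by field_simp
      rw [this]; exact hτ
    set i := relaxedDelaunayFilt P Q ρ t τ with hi
    have hmem : i ≤ t ∧ IsRelaxedDelaunay P Q (ρ * i / t) τ :=
      Nat.sInf_mem ⟨t, htmem⟩
    obtain ⟨hit, hne, hsub, x, hxP, hw⟩ := hmem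
    refine ⟨x, hxP, ?_⟩
    set σ := sigmaX Q hQ ρ t x i with hσ
    have hτσ : τ ⊆ σ := by
      intro q hq
      simp only [hσ, sigmaX, Finset.mem_filter]
      refine ⟨hsub hq, ?_⟩
      have : dist x q - ρ * i / t ≤ Q.inf' hQ (fun q' => dist x q') := by
        apply Finset.le_inf'
        intro b hb
        have := hw q hq b hb
        linarith
      linarith
    have hσQ : σ ⊆ Q := Finset.filter_subset _ _
    have hσw : ∀ q ∈ σ, ∀ q'' ∈ Q, dist x q ≤ dist x q'' + ρ * i / t := by
      intro q hq q'' hq''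
      simp only [hσ, sigmaX, Finset.mem_filter] at hq
      have h2 : Q.inf' hQ (fun q' => dist x q') ≤ dist x q'' :=
        Finset.inf'_le _ hq''
      linarith [hq.2]
    have hrel : ρ * i / t ≤ ρ := by
      rw [div_le_iff₀ (by positivity)]
      have : (i:ℝ) ≤ (t:ℝ) := Nat.cast_le.mpr hit
      nlinarith
    have hσDel : IsRelaxedDelaunay P Q ρ σ :=
      ⟨hne.mono hτσ, hσQ, x, hxP, fun q hq q'' hq'' => (hσw q hq q'' hq'').trans
        (by linarith)⟩
    have hfσ : relaxedDelaunayFilt P Q ρ t σ ≤ i := by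
      apply Nat.sInf_le
      exact ⟨hit, hne.mono hτσ, hσQ, x, hxP, hσw⟩
    by_contra hneq
    have hss : τ ⊂ σ := HasSubset.Subset.ssubset_of_ne hτσ hneq
    have := hcrit σ hσDel hss
    omega
  refine ⟨key, ?_⟩
  set S := {τ : Finset X | IsRelaxedDelaunay P Q ρ τ ∧
      ∀ σ : Finset X, IsRelaxedDelaunay P Q ρ σ → τ ⊂ σ →
        relaxedDelaunayFilt P Q ρ t τ < relaxedDelaunayFilt P Q ρ t σ} with hS
  have hsub : S ⊆ (fun p : X × ℕ => sigmaX Q hQ ρ t p.1 p.2) ''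
      ↑(P ×ˢ Finset.range (t + 1)) := by
    intro τ hτ
    obtain ⟨x, hxP, hx⟩ := key τ hτ.1 hτ.2
    have hle : relaxedDelaunayFilt P Q ρ t τ ≤ t := by
      have htmem : t ∈ {i : ℕ | i ≤ t ∧ IsRelaxedDelaunay P Q (ρ * i / t) τ} := by
        refine ⟨le_refl t, ?_⟩
        have : ρ * (t:ℕ) / (t:ℕ) = ρ := by field_simp
        rw [this]; exact hτ.1
      exact Nat.sInf_le htmem
    exact ⟨(x, relaxedDelaunayFilt P Q ρ t τ), by
      simp [Finset.mem_product, hxP, Nat.lt_succ_of_le hle], hx.symm⟩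
  calc S.ncard ≤ ((fun p : X × ℕ => sigmaX Q hQ ρ t p.1 p.2) ''
        ↑(P ×ˢ Finset.range (t + 1))).ncard :=
        Set.ncard_le_ncard hsub ((P ×ˢ Finset.range (t + 1)).finite_toSet.image _)
    _ ≤ (↑(P ×ˢ Finset.range (t + 1)) : Set (X × ℕ)).ncard :=
        Set.ncard_image_le (P ×ˢ Finset.range (t + 1)).finite_toSet
    _ = P.card * (t + 1) := by
        rw [Set.ncard_coe_finset, Finset.card_product, Finset.card_range]
end
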